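/- Assume D = 0 and T = 1. Let a : [0,∞) → ℝ^L be a differentiable solution of a'(t) = f(a(t)) with a_i(0) ≥ 0 for all i. Then every limit point of the trajectory is a critical point: if (t_n) is a sequence with t_n → ∞ and a(t_n) → a_∞ in ℝ^L, then f(a_∞) = 0. -/

import Mathlib

open Finset Filter

/-- `auxN G κ a i = κ + ∑_{j ~ i} a_j`. -/
noncomputable def auxN {L : ℕ} (G : SimpleGraph (Fin L)) [DecidableRel G.Adj] (κ : ℝ)
    (a : Fin L → ℝ) (i : Fin L) : ℝ :=
  κ + ∑ j ∈ G.neighborFinset i, a j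

/-- The auxin transport vector field
`f_i(a) = D·∑_{k ~ i}(a_k − a_i) + T·∑_{k ~ i}(a_k·a_i/N_k(a) − a_i·a_k/N_i(a))`. -/
noncomputable def auxF {L : ℕ} (G : SimpleGraph (Fin L)) [DecidableRel G.Adj] (κ D T : ℝ)
    (a : Fin L → ℝ) (i : Fin L) : ℝ :=
  D * ∑ k ∈ G.neighborFinset i, (a k - a i) +
    T * ∑ k ∈ G.neighborFinset i,
      (a k * a i / auxN G κ a k - a i * a k / auxN G κ a i)

/-!
Along the flow, `V(a) = ∑ᵢ aᵢ Nᵢ(a)` has derivative `2W(a)`, where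
`W(a) = ∑ᵢ fᵢ(a) Nᵢ(a) = ½ ∑_{i ~ k} aᵢ aₖ (Nᵢ - Nₖ)² / (Nᵢ Nₖ)`. The flow preserves the
nonnegative orthant (a vanishing coordinate has speed `O(aᵢ)`, so it stays zero by Grönwall),
where `W ≥ 0`, with equality only at critical points. Total mass is conserved, so the orbit
stays in a compact box and moves with bounded speed. If `W(a∞) > 0`, then every time the orbit
comes close to `a∞` it stays near `a∞` for a fixed time, during which `V` gains a fixed amount;
infinitely many such gains contradict `V(a(t)) ≤ V(a∞)`.
-/

open Topology NNReal

theorem SimpleGraph.sum_sum_neighborFinset_comm {V M : Type*} [Fintype V] [AddCommMonoid M]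
    (G : SimpleGraph V) [DecidableRel G.Adj] (g : V → V → M) :
    ∑ i, ∑ k ∈ G.neighborFinset i, g i k = ∑ i, ∑ k ∈ G.neighborFinset i, g k i :=
  Finset.sum_comm' fun i k => by simp [G.adj_comm]

theorem SimpleGraph.sum_sum_neighborFinset_sub_mul_of_antisymm {V R : Type*} [Fintype V]
    [CommRing R] (G : SimpleGraph V) [DecidableRel G.Adj] (u : V → R) {g : V → V → R}
    (hg : ∀ i k, g k i = -g i k) :
    ∑ i, ∑ k ∈ G.neighborFinset i, (u i - u k) * g i k =
      2 * ∑ i, ∑ k ∈ G.neighborFinset i, u i * g i k := by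
  have h : ∑ i, ∑ k ∈ G.neighborFinset i, u k * g i k =
      -∑ i, ∑ k ∈ G.neighborFinset i, u i * g i k := by
    rw [G.sum_sum_neighborFinset_comm]
    simp only [← sum_neg_distrib, ← mul_neg, ← hg]
  simp only [sub_mul, sum_sub_distrib, h]
  ring

theorem nonneg_of_hasDerivAt_of_abs_le_mul {ι : Type*} [Fintype ι] {x : ℝ → ι → ℝ}
    {F : (ι → ℝ) → ι → ℝ} (hx : ∀ t, 0 ≤ t → HasDerivAt x (F (x t)) t) (hx₀ : 0 ≤ x 0)
    (hF : ∀ y, 0 ≤ y → ∀ i, ∃ K, ∀ᶠ z in 𝓝 y, |F z i| ≤ K * |z i|) {t : ℝ} (ht : 0 ≤ t) :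
    0 ≤ x t := by
  have hcont : ContinuousOn x (Set.Icc 0 t) := fun s hs =>
    (hx s hs.1).continuousAt.continuousWithinAt
  suffices Set.Icc 0 t ⊆ {s | 0 ≤ x s} from this ⟨ht, le_rfl⟩
  refine IsClosed.Icc_subset_of_forall_mem_nhdsWithin ?_ hx₀ fun s ⟨hs, hs₀, _⟩ => ?_
  · rw [Set.inter_comm]
    exact hcont.preimage_isClosed_of_isClosed isClosed_Icc isClosed_Ici
  refine nhdsWithin_mono _ Set.Ioi_subset_Ici_self (eventually_all.2 fun i => ?_)
  have hxi : ∀ r, 0 ≤ r → HasDerivAt (fun r => x r i) (F (x r) i) r := fun r hr =>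
    hasDerivAt_pi.1 (hx r hr) i
  rcases (hs i).lt_or_eq with hpos | hzero
  · exact ((hxi s hs₀).continuousAt.eventually (eventually_gt_nhds hpos)).filter_mono
      nhdsWithin_le_nhds |>.mono fun r hr => hr.le
  obtain ⟨K, hK⟩ := hF _ hs i
  obtain ⟨u, hsu, hu⟩ := mem_nhdsGE_iff_exists_Icc_subset.1
    (((hx s hs₀).continuousAt.eventually hK).filter_mono nhdsWithin_le_nhds)
  have hzero_on := eq_zero_of_abs_deriv_le_mul_abs_self_of_eq_zero_right
    (fun r hr => (hxi r (hs₀.trans hr.1)).continuousAt.continuousWithinAt)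
    (fun r hr => (hxi r (hs₀.trans hr.1)).hasDerivWithinAt) hzero.symm
    (fun r hr => hu (Set.Ico_subset_Icc_self hr))
  filter_upwards [Icc_mem_nhdsGE hsu] with r hr using (hzero_on r hr).ge

theorem eq_zero_of_tendsto_of_hasDerivAt_lyapunov {E : Type*} [PseudoMetricSpace E]
    {x : ℝ → E} {C : ℝ≥0} (hx : LipschitzOnWith C x (Set.Ici 0)) {V : ℝ → ℝ} {w : E → ℝ}
    (hV : ∀ t, 0 ≤ t → HasDerivAt V (w (x t)) t) (hw : ∀ t, 0 ≤ t → 0 ≤ w (x t))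
    {tn : ℕ → ℝ} (htn : Tendsto tn atTop atTop) {x₀ : E} (hxn : Tendsto (x ∘ tn) atTop (𝓝 x₀))
    (hwc : ContinuousAt w x₀) {l : ℝ} (hVn : Tendsto (V ∘ tn) atTop (𝓝 l)) : w x₀ = 0 := by
  have htn₀ : ∀ᶠ n in atTop, 0 ≤ tn n := htn.eventually_ge_atTop 0
  refine le_antisymm (not_lt.1 fun hpos => ?_)
    (ge_of_tendsto (hwc.tendsto.comp hxn) (htn₀.mono fun n hn => hw _ hn))
  set c := w x₀
  obtain ⟨ε, hε, hball⟩ := Metric.eventually_nhds_iff.1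
    (hwc.eventually (eventually_gt_nhds (half_lt_self hpos)))
  set δ := ε / (2 * (C + 1))
  have hδ : 0 < δ := by positivity
  have hCδ : C * δ ≤ ε / 2 := by
    have : (C + 1) * δ = ε / 2 := by simp only [δ]; field_simp
    nlinarith
  have hV_le : ∀ t, 0 ≤ t → V t ≤ l := by
    have hmono : MonotoneOn V (Set.Ici 0) := monotoneOn_of_hasDerivWithinAt_nonneg
      (convex_Ici 0) (fun t ht => (hV t ht).continuousAt.continuousWithinAt)
      (fun t ht => (hV t (interior_subset ht)).hasDerivWithinAt)
      (fun t ht => hw t (interior_subset ht))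
    intro t ht
    exact ge_of_tendsto hVn <| (htn.eventually_ge_atTop t).mono fun n hn =>
      hmono ht (ht.trans hn) hn
  have hgain : ∀ s, 0 ≤ s → dist (x s) x₀ < ε / 2 → c / 2 * δ ≤ V (s + δ) - V s := by
    intro s hs hdist
    have hnear : ∀ r ∈ Set.Icc s (s + δ), c / 2 < w (x r) := fun r hr => hball <| calc
      dist (x r) x₀ ≤ dist (x r) (x s) + dist (x s) x₀ := dist_triangle _ _ _
      _ < C * δ + ε / 2 := by
        refine add_lt_add_of_le_of_lt ((hx.dist_le_mul r (hs.trans hr.1) s hs).trans ?_) hdist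
        rw [Real.dist_eq, abs_of_nonneg (by linarith [hr.1])]
        gcongr
        linarith [hr.2]
      _ ≤ ε := by linarith
    have hVr : ∀ r ∈ Set.Icc s (s + δ), HasDerivAt V (w (x r)) r := fun r hr =>
      hV r (hs.trans hr.1)
    refine (convex_Icc s (s + δ)).mul_sub_le_image_sub_of_le_deriv (C := c / 2)
      (fun r hr => (hVr r hr).continuousAt.continuousWithinAt)
      (fun r hr => (hVr r (interior_subset hr)).differentiableAt.differentiableWithinAt)
      (fun r hr => ?_) s ⟨le_rfl, by linarith⟩ (s + δ) ⟨by linarith, le_rfl⟩ (by linarith)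
      |>.trans_eq' (by ring)
    rw [(hVr r (interior_subset hr)).deriv]
    exact (hnear r (interior_subset hr)).le
  have hlim : ∀ᶠ n in atTop, V (tn n) + c / 2 * δ ≤ l := by
    filter_upwards [htn₀, hxn.eventually (Metric.ball_mem_nhds x₀ (half_pos hε))] with n hn hdist
    linarith [hgain _ hn hdist, hV_le (tn n + δ) (by linarith)]
  have := le_of_tendsto (hVn.add_const _) hlim
  nlinarith

theorem sub_mul_div_sub_div_nonneg {x y p : ℝ} (hx : 0 < x) (hy : 0 < y) (hp : 0 ≤ p) :
    0 ≤ (x - y) * (p / y - p / x) := by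
  have : (x - y) * (p / y - p / x) = p * (x - y) ^ 2 / (x * y) := by field_simp
  rw [this]
  positivity

section Auxin

variable {L : ℕ} (G : SimpleGraph (Fin L)) [DecidableRel G.Adj] (κ : ℝ)

noncomputable def auxFlux (a : Fin L → ℝ) (i k : Fin L) : ℝ :=
  a k * a i / auxN G κ a k - a i * a k / auxN G κ a i

noncomputable def auxLyapunov (a : Fin L → ℝ) : ℝ := ∑ i, a i * auxN G κ a i

noncomputable def auxDissipation (a : Fin L → ℝ) : ℝ := ∑ i, auxF G κ 0 1 a i * auxN G κ a i

theorem auxN_pos (hκ : 0 < κ) {a : Fin L → ℝ} (ha : 0 ≤ a) (i : Fin L) : 0 < auxN G κ a i :=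
  add_pos_of_pos_of_nonneg hκ (sum_nonneg fun j _ => ha j)

theorem auxFlux_swap (a : Fin L → ℝ) (i k : Fin L) :
    auxFlux G κ a k i = -auxFlux G κ a i k := by
  simp only [auxFlux, neg_sub, mul_comm (a i)]

theorem auxF_zero_one (a : Fin L → ℝ) (i : Fin L) :
    auxF G κ 0 1 a i = ∑ k ∈ G.neighborFinset i, auxFlux G κ a i k := by
  simp [auxF, auxFlux]

theorem auxF_zero_one_eq_mul (a : Fin L → ℝ) (i : Fin L) :
    auxF G κ 0 1 a i =
      a i * ∑ k ∈ G.neighborFinset i, (a k / auxN G κ a k - a k / auxN G κ a i) := by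
  rw [auxF_zero_one, mul_sum]
  exact sum_congr rfl fun k _ => by simp only [auxFlux]; ring

theorem sum_auxF_zero_one (a : Fin L → ℝ) : ∑ i, auxF G κ 0 1 a i = 0 := by
  have h := G.sum_sum_neighborFinset_sub_mul_of_antisymm 1 (auxFlux_swap G κ a)
  simp only [Pi.one_apply, sub_self, zero_mul, sum_const_zero, one_mul] at h
  simp only [auxF_zero_one]
  linarith

theorem two_mul_auxDissipation (a : Fin L → ℝ) :
    2 * auxDissipation G κ a = ∑ i, ∑ k ∈ G.neighborFinset i,
      (auxN G κ a i - auxN G κ a k) * auxFlux G κ a i k := by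
  rw [G.sum_sum_neighborFinset_sub_mul_of_antisymm _ (auxFlux_swap G κ a)]
  simp only [auxDissipation, auxF_zero_one, sum_mul, mul_comm (auxN G κ a _)]

theorem sub_mul_auxFlux_nonneg (hκ : 0 < κ) {a : Fin L → ℝ} (ha : 0 ≤ a) (i k : Fin L) :
    0 ≤ (auxN G κ a i - auxN G κ a k) * auxFlux G κ a i k := by
  rw [auxFlux, mul_comm (a k)]
  exact sub_mul_div_sub_div_nonneg (auxN_pos G κ hκ ha i) (auxN_pos G κ hκ ha k)
    (mul_nonneg (ha i) (ha k))

theorem auxDissipation_nonneg (hκ : 0 < κ) {a : Fin L → ℝ} (ha : 0 ≤ a) :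
    0 ≤ auxDissipation G κ a := by
  have := two_mul_auxDissipation G κ a ▸
    sum_nonneg fun i _ => sum_nonneg fun k _ => sub_mul_auxFlux_nonneg G κ hκ ha i k
  linarith

theorem auxF_eq_zero_of_auxDissipation_eq_zero (hκ : 0 < κ) {a : Fin L → ℝ} (ha : 0 ≤ a)
    (hW : auxDissipation G κ a = 0) (i : Fin L) : auxF G κ 0 1 a i = 0 := by
  have hterm := sub_mul_auxFlux_nonneg G κ hκ ha
  have hsum := two_mul_auxDissipation G κ a
  rw [hW, mul_zero, eq_comm, sum_eq_zero_iff_of_nonneg fun i _ => sum_nonneg fun k _ =>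
    hterm i k] at hsum
  rw [auxF_zero_one]
  refine sum_eq_zero fun k hk => ?_
  rcases mul_eq_zero.1 ((sum_eq_zero_iff_of_nonneg fun k _ => hterm i k).1 (hsum i (mem_univ i))
    k hk) with hNik | hflux
  · rw [auxFlux, ← sub_eq_zero.1 hNik, mul_comm (a k), sub_self]
  · exact hflux

theorem continuous_auxN (i : Fin L) : Continuous fun a : Fin L → ℝ => auxN G κ a i := by
  unfold auxN
  fun_prop

theorem continuous_auxLyapunov : Continuous (auxLyapunov G κ) := by
  have := continuous_auxN G κ
  unfold auxLyapunov
  fun_prop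

theorem continuousAt_auxF {a : Fin L → ℝ} (ha : ∀ k, auxN G κ a k ≠ 0) :
    ContinuousAt (auxF G κ 0 1) a := by
  have := fun k => (continuous_auxN G κ k).continuousAt (x := a)
  refine continuousAt_pi.2 fun i => ?_
  simp only [auxF_zero_one, auxFlux]
  fun_prop (disch := exact ha _)

theorem continuousAt_auxDissipation {a : Fin L → ℝ} (ha : ∀ k, auxN G κ a k ≠ 0) :
    ContinuousAt (auxDissipation G κ) a := by
  have := fun k => (continuous_auxN G κ k).continuousAt (x := a)
  have := continuousAt_pi.1 (continuousAt_auxF G κ ha)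
  unfold auxDissipation
  fun_prop

theorem exists_abs_auxF_le_mul (hκ : 0 < κ) {a : Fin L → ℝ} (ha : 0 ≤ a) (i : Fin L) :
    ∃ K, ∀ᶠ b in 𝓝 a, |auxF G κ 0 1 b i| ≤ K * |b i| := by
  set h := fun b => ∑ k ∈ G.neighborFinset i, (b k / auxN G κ b k - b k / auxN G κ b i)
  have hN := fun k => (auxN_pos G κ hκ ha k).ne'
  have hc : ContinuousAt h a := tendsto_finsetSum _ fun k _ => ContinuousAt.tendsto <|
    have := fun j => (continuous_auxN G κ j).continuousAt (x := a)
    ((continuous_apply k).continuousAt.div (this k) (hN k)).sub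
      ((continuous_apply k).continuousAt.div (this i) (hN i))
  refine ⟨|h a| + 1, (hc.abs.eventually (eventually_lt_nhds (lt_add_one _))).mono
    fun b hb => ?_⟩
  rw [auxF_zero_one_eq_mul, abs_mul, mul_comm]
  exact mul_le_mul_of_nonneg_right hb.le (abs_nonneg _)

theorem hasDerivAt_auxLyapunov {x : ℝ → Fin L → ℝ} {v : Fin L → ℝ} {t : ℝ}
    (hx : HasDerivAt x v t) :
    HasDerivAt (fun s => auxLyapunov G κ (x s))
      (2 * ∑ i, v i * auxN G κ (x t) i - κ * ∑ i, v i) t := by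
  have hxi := hasDerivAt_pi.1 hx
  have hN : ∀ i, HasDerivAt (fun s => auxN G κ (x s) i) (∑ j ∈ G.neighborFinset i, v j) t :=
    fun i => (HasDerivAt.fun_sum fun j _ => hxi j).const_add κ
  refine (HasDerivAt.fun_sum (u := univ) fun i _ => (hxi i).mul (hN i)).congr_deriv ?_
  have hswap : ∑ i, x t i * ∑ j ∈ G.neighborFinset i, v j =
      ∑ i, v i * (auxN G κ (x t) i - κ) := by
    simp only [mul_sum, auxN, add_sub_cancel_left]
    rw [G.sum_sum_neighborFinset_comm]
    simp only [mul_comm]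
  rw [sum_add_distrib, hswap]
  simp only [mul_sub, sum_sub_distrib, ← sum_mul]
  ring

theorem nonneg_of_hasDerivAt_auxF (hκ : 0 < κ) {x : ℝ → Fin L → ℝ}
    (hx : ∀ t, 0 ≤ t → HasDerivAt x (auxF G κ 0 1 (x t)) t) (hx₀ : 0 ≤ x 0) {t : ℝ}
    (ht : 0 ≤ t) : 0 ≤ x t :=
  nonneg_of_hasDerivAt_of_abs_le_mul hx hx₀ (fun _ hy => exists_abs_auxF_le_mul G κ hκ hy) ht

theorem sum_eq_of_hasDerivAt_auxF {x : ℝ → Fin L → ℝ}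
    (hx : ∀ t, 0 ≤ t → HasDerivAt x (auxF G κ 0 1 (x t)) t) {t : ℝ} (ht : 0 ≤ t) :
    ∑ i, x t i = ∑ i, x 0 i := by
  have hsum : ∀ s, 0 ≤ s → HasDerivAt (fun s => ∑ i, x s i) 0 s := fun s hs => by
    simpa only [sum_auxF_zero_one] using
      HasDerivAt.fun_sum (u := univ) fun i _ => hasDerivAt_pi.1 (hx s hs) i
  exact constant_of_has_deriv_right_zero
    (fun s hs => (hsum s hs.1).continuousAt.continuousWithinAt)
    (fun s hs => (hsum s hs.1).hasDerivWithinAt) t ⟨ht, le_rfl⟩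

theorem exists_lipschitzOnWith_of_hasDerivAt_auxF (hκ : 0 < κ) {x : ℝ → Fin L → ℝ}
    (hx : ∀ t, 0 ≤ t → HasDerivAt x (auxF G κ 0 1 (x t)) t) (hx₀ : 0 ≤ x 0) :
    ∃ C, LipschitzOnWith C x (Set.Ici 0) := by
  set box := Set.Icc 0 fun _ => ∑ i, x 0 i
  have hbox : ∀ t, 0 ≤ t → x t ∈ box := fun t ht =>
    ⟨nonneg_of_hasDerivAt_auxF G κ hκ hx hx₀ ht, fun i =>
      sum_eq_of_hasDerivAt_auxF G κ hx ht ▸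
        single_le_sum (fun j _ => nonneg_of_hasDerivAt_auxF G κ hκ hx hx₀ ht j) (mem_univ i)⟩
  have hF : ContinuousOn (auxF G κ 0 1) box := fun y hy =>
    (continuousAt_auxF G κ fun k => (auxN_pos G κ hκ hy.1 k).ne').continuousWithinAt
  obtain ⟨C, hC⟩ := (isCompact_Icc.image_of_continuousOn
    (continuous_nnnorm.comp_continuousOn hF)).bddAbove
  exact ⟨C, (convex_Ici 0).lipschitzOnWith_of_nnnorm_hasDerivWithin_le
    (fun t ht => (hx t ht).hasDerivWithinAt) fun t ht => hC ⟨_, hbox t ht, rfl⟩⟩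

end Auxin

theorem auxin_limit_point_critical_general {L : ℕ} (G : SimpleGraph (Fin L))
    [DecidableRel G.Adj] (κ : ℝ) (hκ : 0 < κ)
    (a : ℝ → Fin L → ℝ)
    (hderiv : ∀ t, 0 ≤ t → HasDerivAt a (auxF G κ 0 1 (a t)) t)
    (hnonneg : ∀ i, 0 ≤ a 0 i)
    (tn : ℕ → ℝ) (htn : Filter.Tendsto tn Filter.atTop Filter.atTop)
    (aInf : Fin L → ℝ)
    (hconv : Filter.Tendsto (fun n => a (tn n)) Filter.atTop (nhds aInf)) :
    ∀ i, auxF G κ 0 1 aInf i = 0 := by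
  have ha : ∀ t, 0 ≤ t → 0 ≤ a t := fun t => nonneg_of_hasDerivAt_auxF G κ hκ hderiv hnonneg
  have haInf : 0 ≤ aInf := ge_of_tendsto hconv ((htn.eventually_ge_atTop 0).mono fun n => ha _)
  obtain ⟨C, hC⟩ := exists_lipschitzOnWith_of_hasDerivAt_auxF G κ hκ hderiv hnonneg
  have hV : ∀ t, 0 ≤ t → HasDerivAt (fun s => auxLyapunov G κ (a s))
      (2 * auxDissipation G κ (a t)) t := fun t ht => by
    simpa only [sum_auxF_zero_one, mul_zero, sub_zero, auxDissipation] using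
      hasDerivAt_auxLyapunov G κ (hderiv t ht)
  have hW := eq_zero_of_tendsto_of_hasDerivAt_lyapunov hC (w := fun y => 2 * auxDissipation G κ y)
    hV (fun t ht => mul_nonneg zero_le_two (auxDissipation_nonneg G κ hκ (ha t ht))) htn hconv
    ((continuousAt_auxDissipation G κ fun k => (auxN_pos G κ hκ haInf k).ne').const_mul 2)
    ((continuous_auxLyapunov G κ).continuousAt.tendsto.comp hconv)
  exact auxF_eq_zero_of_auxDissipation_eq_zero G κ hκ haInf (by linarith)

/-- For pure transport (`D = 0`, `T = 1`), every limit point of a nonnegative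
trajectory is a critical point. -/
theorem auxin_limit_point_critical {L : ℕ} (hL : 1 ≤ L) (G : SimpleGraph (Fin L))
    [DecidableRel G.Adj] (κ : ℝ) (hκ : 0 < κ)
    (a : ℝ → Fin L → ℝ)
    (hderiv : ∀ t, 0 ≤ t → HasDerivAt a (auxF G κ 0 1 (a t)) t)
    (hnonneg : ∀ i, 0 ≤ a 0 i)
    (tn : ℕ → ℝ) (htn : Filter.Tendsto tn Filter.atTop Filter.atTop)
    (aInf : Fin L → ℝ)
    (hconv : Filter.Tendsto (fun n => a (tn n)) Filter.atTop (nhds aInf)) :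
    ∀ i, auxF G κ 0 1 aInf i = 0 :=
  auxin_limit_point_critical_general G κ hκ a hderiv hnonneg tn htn aInf hconv
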